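/- Spikiness bound for Brown double exponential smoothing weights: For the normalized weights w_i^{(t)}(θ) = b_{t-i}(θ) / Σ_{j=0}^{t-1} b_j(θ) with b_k(θ) = (2-θ(k+1))(1-θ)^k, the ratio ||w^{(t)}(θ)||_∞ / ||w^{(t)}(θ)||_2^2 = (Σ_k b_k(θ)) · max_k |b_k(θ)| / Σ_k b_k(θ)^2 is at most 18 e^2 uniformly over θ ∈ (0,1) and t ≥ 1. -/

import Mathlib

/-! Reversing and normalizing the weights turns the ratio into `S M / Q` with `S = ∑_{k<t} b_k`,
`M = max_k |b_k|` and `Q = ∑_{k<t} b_k²`. Bernoulli's inequality gives `θ (k+1) (1-θ)^k ≤ 1`, hence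
`-1 ≤ b_k ≤ 2`, and the telescoping closed form `S = (1 - (1-θ)^t)/θ + t (1-θ)^t` gives
`S ≤ 2 min(t, 1/θ)`. On the other hand `b_k ≥ 1/2` as long as `2kθ ≤ 1`, so the first
`m = min(t, ⌊1/(2θ)⌋ + 1)` terms give `Q ≥ m/4`. As `min(t, 1/θ) ≤ 2m`, the ratio is at most
`32 ≤ 18 e²`. -/

open Finset

namespace Finset

theorem image_tsub_Icc_one (t : ℕ) : (Icc 1 t).image (t - ·) = range t := by
  ext k
  simp only [mem_image, mem_Icc, mem_range]
  exact ⟨by omega, fun hk => ⟨t - k, by omega, by omega⟩⟩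

theorem injOn_tsub_Icc_one (t : ℕ) : Set.InjOn (t - ·) (Icc 1 t) := by
  intro i hi j hj h
  simp only [coe_Icc, Set.mem_Icc] at hi hj
  simp only at h
  omega

theorem sum_Icc_one_tsub {M : Type*} [AddCommMonoid M] (t : ℕ) (f : ℕ → M) :
    ∑ i ∈ Icc 1 t, f (t - i) = ∑ k ∈ range t, f k := by
  rw [← image_tsub_Icc_one, sum_image (injOn_tsub_Icc_one t)]

theorem sup'_Icc_one_tsub {α : Type*} [SemilatticeSup α] (t : ℕ) (hne : (Icc 1 t).Nonempty)
    (hne' : (range t).Nonempty) (f : ℕ → α) :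
    (Icc 1 t).sup' hne (fun i => f (t - i)) = (range t).sup' hne' f := by
  simp only [← image_tsub_Icc_one t, sup'_image]
  rfl

end Finset

theorem sup'_abs_div_div_sum_sq_div {ι : Type*} (s : Finset ι) (hs : s.Nonempty) (b : ι → ℝ)
    {S : ℝ} (hS : 0 ≤ S) :
    s.sup' hs (fun i => |b i / S|) / ∑ i ∈ s, (b i / S) ^ 2
      = S * s.sup' hs (fun i => |b i|) / ∑ i ∈ s, b i ^ 2 := by
  rcases hS.eq_or_lt with rfl | hS
  · simp
  simp only [abs_div, abs_of_pos hS, ← sup'_div₀ hS.le, div_pow, ← sum_div]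
  field_simp

theorem one_sub_pow_mul_one_add_mul_le_one {θ : ℝ} (hθ0 : 0 ≤ θ) (hθ1 : θ ≤ 1) (k : ℕ) :
    (1 - θ) ^ k * (1 + k * θ) ≤ 1 :=
  calc (1 - θ) ^ k * (1 + k * θ) ≤ (1 - θ) ^ k * (1 + θ) ^ k := by
        gcongr
        exact one_add_mul_le_pow (by linarith) k
    _ = (1 - θ ^ 2) ^ k := by rw [← mul_pow]; ring
    _ ≤ 1 := pow_le_one₀ (by nlinarith) (by nlinarith)

noncomputable def brownWeight (θ : ℝ) (k : ℕ) : ℝ := (2 - θ * (k + 1)) * (1 - θ) ^ k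

section BrownWeight

variable {θ : ℝ}

theorem abs_brownWeight_le_two (hθ0 : 0 ≤ θ) (hθ1 : θ ≤ 1) (k : ℕ) : |brownWeight θ k| ≤ 2 := by
  have hp : 0 ≤ (1 - θ) ^ k := pow_nonneg (by linarith) k
  have hp1 : (1 - θ) ^ k ≤ 1 := pow_le_one₀ (by linarith) (by linarith)
  have := one_sub_pow_mul_one_add_mul_le_one hθ0 hθ1 k
  have : 0 ≤ θ * (k + 1) * (1 - θ) ^ k := by positivity
  rw [brownWeight, abs_le]
  constructor <;> nlinarith

theorem sum_range_brownWeight (hθ : θ ≠ 0) (t : ℕ) :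
    ∑ k ∈ range t, brownWeight θ k = (1 - (1 - θ) ^ t) / θ + t * (1 - θ) ^ t := by
  induction t with
  | zero => simp
  | succ t ih =>
    rw [sum_range_succ, ih, brownWeight]
    push_cast
    field_simp
    ring

theorem sum_range_brownWeight_pos (hθ0 : 0 < θ) (hθ1 : θ ≤ 1) {t : ℕ} (ht : t ≠ 0) :
    0 < ∑ k ∈ range t, brownWeight θ k := by
  rw [sum_range_brownWeight hθ0.ne']
  have : (1 - θ) ^ t < 1 := pow_lt_one₀ (by linarith) (by linarith) ht
  have : 0 < (1 - (1 - θ) ^ t) / θ := div_pos (by linarith) hθ0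
  have : 0 ≤ (t : ℝ) * (1 - θ) ^ t := mul_nonneg t.cast_nonneg (pow_nonneg (by linarith) t)
  linarith

theorem sum_range_brownWeight_le_two_div (hθ0 : 0 < θ) (hθ1 : θ ≤ 1) (t : ℕ) :
    ∑ k ∈ range t, brownWeight θ k ≤ 2 / θ := by
  have h := one_sub_pow_mul_one_add_mul_le_one hθ0.le hθ1 t
  have : 0 ≤ (1 - θ) ^ t := pow_nonneg (by linarith) t
  rw [sum_range_brownWeight hθ0.ne', div_add' _ _ _ hθ0.ne']
  gcongr
  nlinarith

theorem sum_range_brownWeight_le_two_mul (hθ0 : 0 ≤ θ) (hθ1 : θ ≤ 1) (t : ℕ) :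
    ∑ k ∈ range t, brownWeight θ k ≤ 2 * t := by
  simpa [mul_comm] using sum_le_card_nsmul (range t) (brownWeight θ) 2 fun k _ =>
    (abs_le.mp (abs_brownWeight_le_two hθ0 hθ1 k)).2

theorem half_le_brownWeight (hθ0 : 0 ≤ θ) (hθ1 : θ ≤ 1) {k : ℕ} (hk : 2 * k * θ ≤ 1) :
    1 / 2 ≤ brownWeight θ k := by
  have hpow : 1 - k * θ ≤ (1 - θ) ^ k := by
    simpa [sub_eq_add_neg] using one_add_mul_le_pow (a := -θ) (by linarith) k
  have hlin : 1 ≤ 2 - θ * (k + 1) := by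
    rcases k.eq_zero_or_pos with rfl | hk0
    · norm_num
      linarith
    · have : (1 : ℝ) ≤ k := by exact_mod_cast hk0
      nlinarith
  rw [brownWeight]
  nlinarith

theorem min_div_four_le_sum_sq_brownWeight (hθ0 : 0 < θ) (hθ1 : θ ≤ 1) (t : ℕ) :
    (min t (⌊1 / (2 * θ)⌋₊ + 1) : ℕ) / (4 : ℝ) ≤ ∑ k ∈ range t, brownWeight θ k ^ 2 := by
  set m := min t (⌊1 / (2 * θ)⌋₊ + 1)
  have hlarge : ∀ k ∈ range m, (1 / 2 : ℝ) ^ 2 ≤ brownWeight θ k ^ 2 := by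
    intro k hk
    have hk : (k : ℝ) ≤ 1 / (2 * θ) :=
      (Nat.le_floor_iff (by positivity)).mp (by simp only [mem_range, m] at hk; omega)
    have hk : 2 * k * θ ≤ 1 := by
      rw [le_div_iff₀ (by positivity)] at hk
      linarith
    exact pow_le_pow_left₀ (by norm_num) (half_le_brownWeight hθ0.le hθ1 hk) 2
  calc (m : ℝ) / 4 = ∑ k ∈ range m, (1 / 2 : ℝ) ^ 2 := by simp; ring
    _ ≤ ∑ k ∈ range m, brownWeight θ k ^ 2 := sum_le_sum hlarge
    _ ≤ ∑ k ∈ range t, brownWeight θ k ^ 2 :=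
      sum_le_sum_of_subset_of_nonneg (range_subset_range.mpr (min_le_left _ _))
        fun _ _ _ => sq_nonneg _

theorem sum_mul_sup'_abs_div_sum_sq_brownWeight_le (hθ0 : 0 < θ) (hθ1 : θ ≤ 1) {t : ℕ}
    (hne : (range t).Nonempty) :
    (∑ k ∈ range t, brownWeight θ k) * (range t).sup' hne (fun k => |brownWeight θ k|)
      / ∑ k ∈ range t, brownWeight θ k ^ 2 ≤ 32 := by
  set m := min t (⌊1 / (2 * θ)⌋₊ + 1)
  have ht : t ≠ 0 := nonempty_range_iff.mp hne
  have hS := sum_range_brownWeight_pos hθ0 hθ1 ht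
  have hM : (range t).sup' hne (fun k => |brownWeight θ k|) ≤ 2 :=
    sup'_le _ _ fun k _ => abs_brownWeight_le_two hθ0.le hθ1 k
  have hSm : ∑ k ∈ range t, brownWeight θ k ≤ 4 * m :=
    calc ∑ k ∈ range t, brownWeight θ k ≤ 4 * min (t : ℝ) (1 / (2 * θ)) := by
          rw [mul_min_of_nonneg _ _ (by norm_num)]
          refine le_min ?_ ?_
          · linarith [sum_range_brownWeight_le_two_mul hθ0.le hθ1 t, t.cast_nonneg (α := ℝ)]
          · have := sum_range_brownWeight_le_two_div hθ0 hθ1 t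
            rwa [show (2 : ℝ) / θ = 4 * (1 / (2 * θ)) by ring] at this
      _ ≤ 4 * m := by
          gcongr
          push_cast [m]
          exact min_le_min le_rfl (Nat.lt_floor_add_one _).le
  have hQ := min_div_four_le_sum_sq_brownWeight hθ0 hθ1 t
  have hm : (1 : ℝ) ≤ m := by exact_mod_cast le_min (Nat.one_le_iff_ne_zero.mpr ht) le_add_self
  rw [div_le_iff₀ (by linarith)]
  nlinarith

end BrownWeight

open Finset in
/-- Spikiness bound for Brown double exponential smoothing weights: for the normalized
weights `w_i^{(t)}(θ) = b_{t-i}(θ) / ∑_{j=0}^{t-1} b_j(θ)` with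
`b_k(θ) = (2-θ(k+1))(1-θ)^k`, the ratio `‖w‖_∞ / ‖w‖_2²`, which equals
`(∑_k b_k) · max_k |b_k| / ∑_k b_k²`, is at most `18 e²` for all `θ ∈ (0,1)`, `t ≥ 1`. -/
theorem stmt_14 (t : ℕ) (ht : 1 ≤ t) (θ : ℝ) (hθ0 : 0 < θ) (hθ1 : θ < 1)
    (b : ℕ → ℝ) (hb : ∀ k, b k = (2 - θ * (k + 1)) * (1 - θ) ^ k)
    (w : ℕ → ℝ) (hw : ∀ i, w i = b (t - i) / ∑ j ∈ range t, b j)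
    (hne : (Icc 1 t).Nonempty) (hne' : (range t).Nonempty) :
    ((Icc 1 t).sup' hne (fun i => |w i|)) / (∑ i ∈ Icc 1 t, (w i) ^ 2)
        = (∑ k ∈ range t, b k) * ((range t).sup' hne' (fun k => |b k|))
            / (∑ k ∈ range t, (b k) ^ 2)
    ∧ ((Icc 1 t).sup' hne (fun i => |w i|)) / (∑ i ∈ Icc 1 t, (w i) ^ 2)
        ≤ 18 * Real.exp 1 ^ 2 := by
  obtain rfl : b = brownWeight θ := funext hb
  simp only [hw]
  have hS := sum_range_brownWeight_pos hθ0 hθ1.le (Nat.one_le_iff_ne_zero.mp ht)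
  rw [sup'_Icc_one_tsub t hne hne' fun k => |brownWeight θ k / ∑ j ∈ range t, brownWeight θ j|,
    sum_Icc_one_tsub t fun k => (brownWeight θ k / ∑ j ∈ range t, brownWeight θ j) ^ 2,
    sup'_abs_div_div_sum_sq_div _ _ _ hS.le]
  refine ⟨rfl, ?_⟩
  calc _ ≤ (32 : ℝ) := sum_mul_sup'_abs_div_sum_sq_brownWeight_le hθ0 hθ1.le hne'
    _ ≤ 18 * Real.exp 1 ^ 2 := by nlinarith [Real.add_one_le_exp 1]
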